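/- arXiv:1304.0062 — 2 statements merged into one kernel-verified Lean document; each statement's English description precedes it below -/
import Mathlib

section
/- Let ({X_k*}, {ρ_k*}) be an optimal solution of the SDR problem (a feasible point whose objective Σ_k Tr(X_k*) is minimal over the feasible set). Then rank(X_k*) = 1 for every k = 1,…,K; i.e., the semidefinite relaxation of the JBPS problem is tight. -/
noncomputable section

open Finset Matrix
open scoped ComplexOrder

/-- The (real) quadratic form `h^H X h` (its real part; it is real for Hermitian `X`). -/
def quadForm {Nt : ℕ} (h : Fin Nt → ℂ) (X : Matrix (Fin Nt) (Fin Nt) ℂ) : ℝ :=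
  (star h ⬝ᵥ X *ᵥ h).re

/-- Feasibility of the semidefinite relaxation (SDR) of the JBPS problem. -/
def SDRFeasible {K Nt : ℕ} (h : Fin K → (Fin Nt → ℂ)) (σ2 δ2 ζ γ e : Fin K → ℝ)
    (X : Fin K → Matrix (Fin Nt) (Fin Nt) ℂ) (ρ : Fin K → ℝ) : Prop :=
  (∀ k, (X k).PosSemidef) ∧ (∀ k, 0 < ρ k ∧ ρ k < 1) ∧
  (∀ k, σ2 k + δ2 k / ρ k ≤
      (1 / γ k) * quadForm (h k) (X k) - ∑ j ∈ univ.erase k, quadForm (h k) (X j)) ∧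
  (∀ k, e k / (ζ k * (1 - ρ k)) - σ2 k ≤ ∑ j, quadForm (h k) (X j))

/-!
Eliminating `ρ`, a beam design `X` is feasible iff it lies in the convex set where the SINR
margins `Qₖ` and received powers `Eₖ` (affine in `X`) are positive and satisfies the convex
constraints `δₖ²/Qₖ + eₖ/(ζₖ Eₖ) ≤ 1`, for which `2 • X` is a Slater point. Strong duality
gives multipliers `λ ≥ 0` such that the optimal `X` minimises the Lagrangian on that set.
Differentiating along the `k`-th beam shows that `Zₖ = I + ∑ⱼ cⱼ hⱼhⱼᴴ - aₖ hₖhₖᴴ`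
(with `aⱼ = 0 → cⱼ = 0`) is positive semidefinite (directions `vvᴴ`) and has
`re tr (Zₖ Xₖ) = 0` (directions `±Xₖ`), hence `Zₖ Xₖ = 0`. As every `Zⱼ` is positive
semidefinite, a vector of `ker Zₖ` orthogonal to `hₖ` vanishes, so the range of `Xₖ`, which
lies in `ker Zₖ`, has dimension at most one; it is nonzero because `hₖᴴ Xₖ hₖ > 0`.
-/

open scoped Pointwise

lemma nonneg_of_forall_pos_add_mul_pos {b c : ℝ} (h : ∀ t > 0, 0 < b + t * c) :
    0 ≤ b ∧ 0 ≤ c := by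
  constructor
  · by_contra! hb
    set t := -b / (|c| + 1)
    have ht : 0 < t := div_pos (neg_pos.2 hb) (by positivity)
    have htc : t * (|c| + 1) = -b := div_mul_cancel₀ _ (by positivity)
    nlinarith [h t ht, mul_le_mul_of_nonneg_left (le_abs_self c) ht.le]
  · by_contra! hc
    set t := (|b| + 1) / -c
    have htc : t * -c = |b| + 1 := div_mul_cancel₀ _ (neg_pos.2 hc).ne'
    linarith [h t (div_pos (by positivity) (neg_pos.2 hc)), le_abs_self b]

theorem Convex.exists_nonneg_ne_zero_sum_mul_nonneg {ι : Type*} [Fintype ι]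
    {A : Set (ι → ℝ)} (hA : Convex ℝ A) (hne : A.Nonempty) (hA_neg : ∀ a ∈ A, ∃ i, 0 ≤ a i) :
    ∃ c : ι → ℝ, 0 ≤ c ∧ c ≠ 0 ∧ ∀ a ∈ A, 0 ≤ ∑ i, c i * a i := by
  classical
  set P : Set (ι → ℝ) := {y | ∀ i, 0 < y i}
  have hP_open : IsOpen P := by
    simp only [P, Set.ofPred_forall]
    exact isOpen_iInter_of_finite fun i => isOpen_lt continuous_const (continuous_apply i)
  have hP_conv : Convex ℝ P := by
    simp only [P, Set.ofPred_forall]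
    exact convex_iInter fun i => convex_halfSpace_gt (LinearMap.proj i).isLinear 0
  have h0 : (0 : ι → ℝ) ∉ A + P := by
    rintro ⟨a, ha, p, hp, hap⟩
    obtain ⟨i, hi⟩ := hA_neg a ha
    have := congr_fun hap i
    simp only [Pi.add_apply, Pi.zero_apply] at this
    linarith [hp i]
  obtain ⟨f, hf⟩ := geometric_hahn_banach_point_open (hA.add hP_conv) hP_open.add_left h0
  set c : ι → ℝ := fun i => f (fun j => if i = j then 1 else 0)
  have hfc : ∀ y, f y = ∑ i, c i * y i := fun y => by
    simpa [mul_comm] using f.toLinearMap.pi_apply_eq_sum_univ y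
  have hpos : ∀ a ∈ A, ∀ p ∈ P, 0 < f a + f p := fun a ha p hp => by
    simpa using hf (a + p) ⟨a, ha, p, hp, rfl⟩
  obtain ⟨a₀, ha₀⟩ := hne
  have hc : 0 ≤ c := fun i => by
    refine (nonneg_of_forall_pos_add_mul_pos (b := f a₀ + f 1) fun t ht => ?_).2
    have := hpos a₀ ha₀ (1 + t • fun j => if i = j then 1 else 0) fun j => by
      by_cases hij : i = j <;> simp [hij]; linarith
    rwa [map_add, map_smul, smul_eq_mul, ← add_assoc] at this
  refine ⟨c, hc, fun hc0 => ?_, fun a ha => ?_⟩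
  · have := hpos a₀ ha₀ 1 fun _ => one_pos
    simp [hfc, hc0] at this
  · rw [← hfc]
    refine (nonneg_of_forall_pos_add_mul_pos (c := f 1) fun t ht => ?_).1
    have := hpos a ha (t • 1) fun _ => by simpa using ht
    rwa [map_smul, smul_eq_mul] at this

theorem ConvexOn.exists_lagrange_multipliers {E ι : Type*} [AddCommGroup E] [Module ℝ E]
    [Fintype ι] {S : Set E} {f : E → ℝ} {g : ι → E → ℝ} (hf : ConvexOn ℝ S f)
    (hg : ∀ i, ConvexOn ℝ S (g i)) {x₀ : E} (hx₀ : x₀ ∈ S) (hslater : ∀ i, g i x₀ < 0)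
    {p : ℝ} (hp : ∀ x ∈ S, (∀ i, g i x ≤ 0) → p ≤ f x) :
    ∃ lam : ι → ℝ, 0 ≤ lam ∧ ∀ x ∈ S, p ≤ f x + ∑ i, lam i * g i x := by
  -- coordinate `none` carries the objective, coordinate `some i` the `i`-th constraint
  set A : Set (Option ι → ℝ) :=
    {y | ∃ x ∈ S, f x - p ≤ y none ∧ ∀ i, g i x ≤ y (some i)}
  have hA : Convex ℝ A := by
    rintro y₁ ⟨x₁, hx₁, hf₁, hg₁⟩ y₂ ⟨x₂, hx₂, hf₂, hg₂⟩ a b ha hb hab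
    refine ⟨a • x₁ + b • x₂, hf.1 hx₁ hx₂ ha hb hab, ?_, fun i => ?_⟩
    · have := hf.2 hx₁ hx₂ ha hb hab
      simp only [smul_eq_mul, Pi.add_apply, Pi.smul_apply] at this ⊢
      have hp' : p = a * p + b * p := by rw [← add_mul, hab, one_mul]
      linarith [mul_le_mul_of_nonneg_left hf₁ ha, mul_le_mul_of_nonneg_left hf₂ hb]
    · have := (hg i).2 hx₁ hx₂ ha hb hab
      simp only [smul_eq_mul, Pi.add_apply, Pi.smul_apply] at this ⊢
      linarith [mul_le_mul_of_nonneg_left (hg₁ i) ha, mul_le_mul_of_nonneg_left (hg₂ i) hb]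
  have hmem : ∀ x ∈ S, (fun o => o.elim (f x - p) (g · x)) ∈ A :=
    fun x hx => ⟨x, hx, le_rfl, fun _ => le_rfl⟩
  obtain ⟨c, hc, hc0, hcA⟩ := hA.exists_nonneg_ne_zero_sum_mul_nonneg ⟨_, hmem x₀ hx₀⟩
    fun y ⟨x, hx, hfx, hgx⟩ => by
      by_contra! hy
      have := hp x hx fun i => (hgx i).trans (hy (some i)).le
      linarith [hy none]
  have hdual : ∀ x ∈ S, 0 ≤ c none * (f x - p) + ∑ i, c (some i) * g i x := fun x hx => by
    simpa [Fintype.sum_option] using hcA _ (hmem x hx)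
  have hc_none : 0 < c none := by
    refine (hc none).lt_of_ne' fun h0 => hc0 ?_
    have hterm : (fun i => c (some i) * g i x₀) ≤ 0 :=
      fun i => mul_nonpos_of_nonneg_of_nonpos (hc _) (hslater i).le
    have hzero := (Fintype.sum_eq_zero_iff_of_nonpos hterm).mp <|
      le_antisymm (sum_nonpos fun i _ => hterm i) (by simpa [h0] using hdual x₀ hx₀)
    funext o
    cases o with
    | none => exact h0
    | some i => simpa [(hslater i).ne] using congr_fun hzero i
  refine ⟨fun i => c (some i) / c none, fun i => div_nonneg (hc _) hc_none.le, fun x hx => ?_⟩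
  have hscale : f x - p + ∑ i, c (some i) / c none * g i x =
      (c none * (f x - p) + ∑ i, c (some i) * g i x) / c none := by
    simp_rw [div_mul_eq_mul_div, ← sum_div]
    field_simp
  linarith [div_nonneg (hdual x hx) hc_none.le]

section QuadForm

variable {Nt : ℕ}

lemma quadForm_add (v : Fin Nt → ℂ) (X Y : Matrix (Fin Nt) (Fin Nt) ℂ) :
    quadForm v (X + Y) = quadForm v X + quadForm v Y := by
  simp [quadForm, add_mulVec]

lemma quadForm_smul (v : Fin Nt → ℂ) (r : ℝ) (X : Matrix (Fin Nt) (Fin Nt) ℂ) :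
    quadForm v (r • X) = r * quadForm v X := by
  simp [quadForm, smul_mulVec]

lemma quadForm_sub (v : Fin Nt → ℂ) (X Y : Matrix (Fin Nt) (Fin Nt) ℂ) :
    quadForm v (X - Y) = quadForm v X - quadForm v Y := by
  simp [quadForm, sub_mulVec]

@[simp] lemma quadForm_zero (v : Fin Nt → ℂ) : quadForm v 0 = 0 := by
  simp [quadForm]

lemma quadForm_sum {ι : Type*} (s : Finset ι) (v : Fin Nt → ℂ)
    (X : ι → Matrix (Fin Nt) (Fin Nt) ℂ) :
    quadForm v (∑ i ∈ s, X i) = ∑ i ∈ s, quadForm v (X i) := by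
  simp [quadForm, sum_mulVec, dotProduct_sum]

def quadFormₗ (v : Fin Nt → ℂ) : Matrix (Fin Nt) (Fin Nt) ℂ →ₗ[ℝ] ℝ where
  toFun := quadForm v
  map_add' := quadForm_add v
  map_smul' := quadForm_smul v

@[simp] lemma quadFormₗ_apply (v : Fin Nt → ℂ) (X : Matrix (Fin Nt) (Fin Nt) ℂ) :
    quadFormₗ v X = quadForm v X := rfl

lemma quadForm_nonneg {v : Fin Nt → ℂ} {X : Matrix (Fin Nt) (Fin Nt) ℂ} (hX : X.PosSemidef) :
    0 ≤ quadForm v X :=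
  (Complex.le_def.mp (hX.dotProduct_mulVec_nonneg v)).1

lemma quadForm_one_eq_zero_iff {v : Fin Nt → ℂ} : quadForm v 1 = 0 ↔ v = 0 := by
  rw [← dotProduct_star_self_eq_zero, quadForm, one_mulVec]
  have := Complex.le_def.mp (dotProduct_star_self_nonneg v)
  constructor
  · intro h; exact Complex.ext h this.2.symm
  · intro h; simp [h]

lemma quadForm_vecMulVec_eq_zero {v w : Fin Nt → ℂ} (h : star w ⬝ᵥ v = 0) :
    quadForm v (vecMulVec w (star w)) = 0 := by
  simp [quadForm, vecMulVec_mulVec, h]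

lemma re_trace_mul_vecMulVec (Z : Matrix (Fin Nt) (Fin Nt) ℂ) (v : Fin Nt → ℂ) :
    (Z * vecMulVec v (star v)).trace.re = quadForm v Z := by
  rw [mul_vecMulVec, trace_vecMulVec, dotProduct_comm, quadForm]

lemma re_trace_vecMulVec_mul (v : Fin Nt → ℂ) (D : Matrix (Fin Nt) (Fin Nt) ℂ) :
    (vecMulVec v (star v) * D).trace.re = quadForm v D := by
  rw [vecMulVec_mul, trace_vecMulVec, dotProduct_comm, ← dotProduct_mulVec, quadForm]

lemma posSemidef_of_isHermitian_of_quadForm_nonneg {Z : Matrix (Fin Nt) (Fin Nt) ℂ}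
    (hZ : Z.IsHermitian) (h : ∀ v, 0 ≤ quadForm v Z) : Z.PosSemidef :=
  .of_dotProduct_mulVec_nonneg hZ fun v =>
    Complex.le_def.mpr ⟨h v, (hZ.im_star_dotProduct_mulVec_self v).symm⟩

end QuadForm

theorem Matrix.PosSemidef.mul_eq_zero_of_re_trace_mul_eq_zero {n : Type*} [Fintype n]
    [DecidableEq n] {Z X : Matrix n n ℂ} (hZ : Z.PosSemidef) (hX : X.PosSemidef)
    (h : (Z * X).trace.re = 0) : Z * X = 0 := by
  obtain ⟨B, rfl⟩ : ∃ B : Matrix n n ℂ, X = star B * B := by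
    open scoped MatrixOrder Matrix.Norms.L2Operator in
    exact CStarAlgebra.nonneg_iff_eq_star_mul_self.mp hX.nonneg
  rw [star_eq_conjTranspose] at h ⊢
  have hBZB := hZ.mul_mul_conjTranspose_same B
  have htrace : (B * Z * Bᴴ).trace = 0 := by
    have := Complex.le_def.mp hBZB.trace_nonneg
    rw [trace_mul_cycle, trace_mul_comm] at this ⊢
    exact Complex.ext h this.2.symm
  have hZB : Z * Bᴴ = 0 := by
    refine ext_of_mulVec_single fun i => ?_
    rw [zero_mulVec, ← mulVec_mulVec, ← hZ.dotProduct_mulVec_zero_iff, star_mulVec,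
      ← dotProduct_mulVec, conjTranspose_conjTranspose, mulVec_mulVec, mulVec_mulVec,
      hBZB.trace_eq_zero_iff.mp htrace, zero_mulVec, dotProduct_zero]
  rw [← Matrix.mul_assoc, hZB, Matrix.zero_mul]

theorem Matrix.rank_le_one_of_mul_eq_zero {n 𝕜 : Type*} [Fintype n] [Field 𝕜]
    {Z X : Matrix n n 𝕜} (v : n → 𝕜) (hZX : Z * X = 0)
    (hker : ∀ w, Z *ᵥ w = 0 → v ⬝ᵥ w = 0 → w = 0) : X.rank ≤ 1 := by
  let φ := (dotProductBilin 𝕜 𝕜 v).comp (LinearMap.range X.mulVecLin).subtype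
  have hφ : Function.Injective φ := by
    rw [← LinearMap.ker_eq_bot, LinearMap.ker_eq_bot']
    rintro ⟨w, u, hu⟩ hw
    refine Subtype.ext (hker w ?_ hw)
    rw [← hu, mulVecLin_apply, mulVec_mulVec, hZX, zero_mulVec]
  simpa [rank] using LinearMap.finrank_le_finrank_of_injective hφ

theorem Matrix.rank_pos_of_mulVec_ne_zero {n 𝕜 : Type*} [Fintype n] [Field 𝕜]
    {X : Matrix n n 𝕜} {v : n → 𝕜} (hv : X *ᵥ v ≠ 0) : 0 < X.rank := by
  refine Nat.pos_of_ne_zero fun h0 => hv ?_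
  have hmem := LinearMap.mem_range_self X.mulVecLin v
  rwa [Submodule.finrank_eq_zero.mp h0, Submodule.mem_bot] at hmem

section Certificate

variable {ι : Type*} [Fintype ι] {Nt : ℕ}

def certificate (h : ι → Fin Nt → ℂ) (c a : ι → ℝ) (k : ι) : Matrix (Fin Nt) (Fin Nt) ℂ :=
  1 + ∑ j, c j • vecMulVec (h j) (star (h j)) - a k • vecMulVec (h k) (star (h k))

variable (h : ι → Fin Nt → ℂ) (c a : ι → ℝ)

lemma certificate_isHermitian (k : ι) : (certificate h c a k).IsHermitian := by
  have hP : ∀ j, IsSelfAdjoint (vecMulVec (h j) (star (h j))) :=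
    fun j => (posSemidef_vecMulVec_self_star (h j)).isHermitian
  exact ((IsSelfAdjoint.one _).add (isSelfAdjoint_sum _ fun j _ =>
    (IsSelfAdjoint.all (c j)).smul (hP j))).sub ((IsSelfAdjoint.all (a k)).smul (hP k))

lemma quadForm_certificate (k : ι) (v : Fin Nt → ℂ) :
    quadForm v (certificate h c a k) = quadForm v 1 +
      ∑ j, c j * quadForm v (vecMulVec (h j) (star (h j))) -
        a k * quadForm v (vecMulVec (h k) (star (h k))) := by
  simp [certificate, quadForm_sub, quadForm_add, quadForm_sum, quadForm_smul]

lemma re_trace_certificate_mul (k : ι) (D : Matrix (Fin Nt) (Fin Nt) ℂ) :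
    (certificate h c a k * D).trace.re =
      D.trace.re + ∑ j, c j * quadForm (h j) D - a k * quadForm (h k) D := by
  simp [certificate, sub_mul, add_mul, Finset.sum_mul, trace_sum, re_trace_vecMulVec_mul]

variable {h c a}

theorem eq_zero_of_quadForm_certificate_eq_zero (ha : 0 ≤ a) (hca : ∀ j, a j = 0 → c j = 0)
    (hZ : ∀ j v, 0 ≤ quadForm v (certificate h c a j)) {k : ι} {v : Fin Nt → ℂ}
    (hv : quadForm v (certificate h c a k) = 0) (hk : star (h k) ⬝ᵥ v = 0) : v = 0 := by
  set q : ι → ℝ := fun j => quadForm v (vecMulVec (h j) (star (h j)))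
  have hq : 0 ≤ q := fun j => quadForm_nonneg (posSemidef_vecMulVec_self_star (h j))
  have hC : quadForm v 1 + ∑ j, c j * q j = 0 := by
    simpa [quadForm_certificate, q, quadForm_vecMulVec_eq_zero hk] using hv
  have haq : ∀ j, a j * q j = 0 := fun j => by
    have := hZ j v
    rw [quadForm_certificate, hC] at this
    exact le_antisymm (by linarith) (mul_nonneg (ha j) (hq j))
  have hcq : ∀ j, c j * q j = 0 := fun j => by
    rcases mul_eq_zero.mp (haq j) with h0 | h0 <;> simp [h0, hca]
  simpa [hcq, quadForm_one_eq_zero_iff] using hC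

end Certificate

section AffineMap

variable {E : Type*} [AddCommGroup E] [Module ℝ E]

lemma convexOn_const_div_affineMap {s : Set E} (hs : Convex ℝ s) (L : E →ᵃ[ℝ] ℝ)
    (hL : ∀ x ∈ s, 0 < L x) {c : ℝ} (hc : 0 ≤ c) : ConvexOn ℝ s fun x => c / L x := by
  have := ((convexOn_zpow (-1)).comp_affineMap L).subset (fun x hx => hL x hx) hs
  simpa [div_eq_mul_inv] using this.smul hc

lemma AffineMap.apply_add_smul (L : E →ᵃ[ℝ] ℝ) (x d : E) (t : ℝ) :
    L (x + t • d) = L x + t * L.linear d := by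
  rw [add_comm x, ← vadd_eq_add, L.map_vadd, map_smul, vadd_eq_add, smul_eq_mul, add_comm]

lemma AffineMap.eventually_pos_apply_add_smul (L : E →ᵃ[ℝ] ℝ) {x : E} (hx : 0 < L x) (d : E) :
    ∀ᶠ t in nhds (0 : ℝ), 0 < L (x + t • d) := by
  have hcont : Continuous fun t : ℝ => L x + t * L.linear d := by fun_prop
  have : Filter.Tendsto (fun t : ℝ => L x + t * L.linear d) (nhds 0) (nhds (L x)) := by
    simpa using hcont.tendsto 0
  simpa only [L.apply_add_smul] using this.eventually (lt_mem_nhds hx)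

end AffineMap

lemma HasDerivAt.nonneg_of_isLocalMinOn_Ici {φ : ℝ → ℝ} {φ' : ℝ} (hφ : HasDerivAt φ φ' 0)
    (hmin : IsLocalMinOn φ (Set.Ici 0) 0) : 0 ≤ φ' := by
  have h1 : (1 : ℝ) ∈ posTangentConeAt (Set.Ici (0 : ℝ)) 0 :=
    mem_posTangentConeAt_of_segment_subset (by simp [segment_eq_Icc, Set.Icc_subset_Ici_self])
  simpa using hmin.hasFDerivWithinAt_nonneg hφ.hasFDerivAt.hasFDerivWithinAt h1

lemma hasDerivAt_div_add_mul (c a b : ℝ) (ha : a ≠ 0) :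
    HasDerivAt (fun t => c / (a + t * b)) (-(c * b) / a ^ 2) 0 := by
  have := (hasDerivAt_const (0 : ℝ) c).div (((hasDerivAt_id' 0).mul_const b).const_add a)
    (by simpa)
  exact this.congr_deriv (by simp)

lemma exists_powerSplit_iff {δ e ζ Q E : ℝ} (hδ : 0 < δ) (he : 0 < e) (hζ : 0 < ζ) :
    (∃ ρ : ℝ, (0 < ρ ∧ ρ < 1) ∧ δ / ρ ≤ Q ∧ e / (ζ * (1 - ρ)) ≤ E) ↔
      (0 < Q ∧ 0 < E) ∧ δ / Q + e / (ζ * E) ≤ 1 := by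
  constructor
  · rintro ⟨ρ, ⟨hρ0, hρ1⟩, hQ, hE⟩
    have hρ1' : 0 < 1 - ρ := by linarith
    have hQ0 : 0 < Q := (div_pos hδ hρ0).trans_le hQ
    have hE0 : 0 < E := (div_pos he (mul_pos hζ hρ1')).trans_le hE
    refine ⟨⟨hQ0, hE0⟩, ?_⟩
    rw [div_le_comm₀ hρ0 hQ0] at hQ
    rw [← div_div, div_le_comm₀ hρ1' hE0, div_div] at hE
    linarith
  · rintro ⟨⟨hQ0, hE0⟩, hsum⟩
    have hEpos : 0 < e / (ζ * E) := div_pos he (mul_pos hζ hE0)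
    refine ⟨δ / Q, ⟨div_pos hδ hQ0, by linarith⟩, (div_div_cancel₀ hδ.ne').le, ?_⟩
    rw [← div_div, div_le_comm₀ (by linarith) hE0, div_div]
    linarith

section ReducedProblem

variable {K Nt : ℕ} (h : Fin K → Fin Nt → ℂ) (σ2 δ2 ζ γ e : Fin K → ℝ)

def receivedPower (k : Fin K) : (Fin K → Matrix (Fin Nt) (Fin Nt) ℂ) →ᵃ[ℝ] ℝ :=
  (∑ j, (quadFormₗ (h k)).comp (LinearMap.proj j)).toAffineMap + AffineMap.const ℝ _ (σ2 k)

/-- The SINR constraint of user `k` reads `δₖ²/ρₖ ≤ sinrMargin h σ2 γ k X`. -/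
def sinrMargin (k : Fin K) : (Fin K → Matrix (Fin Nt) (Fin Nt) ℂ) →ᵃ[ℝ] ℝ :=
  ((1 + 1 / γ k) • (quadFormₗ (h k)).comp (LinearMap.proj k)).toAffineMap -
    receivedPower h σ2 k

def totalPower : (Fin K → Matrix (Fin Nt) (Fin Nt) ℂ) →ₗ[ℝ] ℝ :=
  Complex.reLm.comp (∑ k, (traceLinearMap (Fin Nt) ℝ ℂ).comp (LinearMap.proj k))

def reducedDomain : Set (Fin K → Matrix (Fin Nt) (Fin Nt) ℂ) :=
  {X | (∀ k, (X k).PosSemidef) ∧ ∀ k, 0 < sinrMargin h σ2 γ k X ∧ 0 < receivedPower h σ2 k X}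

/-- What is left of both constraints of user `k` once `ρₖ` is eliminated. -/
def splitConstraint (k : Fin K) (X : Fin K → Matrix (Fin Nt) (Fin Nt) ℂ) : ℝ :=
  δ2 k / sinrMargin h σ2 γ k X + e k / (ζ k * receivedPower h σ2 k X) - 1

def lagrangian (lam : Fin K → ℝ) (X : Fin K → Matrix (Fin Nt) (Fin Nt) ℂ) : ℝ :=
  totalPower X + ∑ j, lam j * splitConstraint h σ2 δ2 ζ γ e j X

/-- `re (tr (dualCertificate lam X k * D))` is the derivative of the Lagrangian at `X` in the
direction `D` of the `k`-th beam. -/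
def dualCertificate (lam : Fin K → ℝ) (X : Fin K → Matrix (Fin Nt) (Fin Nt) ℂ) (k : Fin K) :
    Matrix (Fin Nt) (Fin Nt) ℂ :=
  certificate h
    (fun j => lam j * (δ2 j / sinrMargin h σ2 γ j X ^ 2 - e j / (ζ j * receivedPower h σ2 j X ^ 2)))
    (fun j => lam j * ((1 + 1 / γ j) * δ2 j / sinrMargin h σ2 γ j X ^ 2)) k

variable {h σ2 δ2 ζ γ e}

@[simp] lemma receivedPower_apply (k : Fin K) (X : Fin K → Matrix (Fin Nt) (Fin Nt) ℂ) :
    receivedPower h σ2 k X = ∑ j, quadForm (h k) (X j) + σ2 k := by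
  simp [receivedPower]

@[simp] lemma sinrMargin_apply (k : Fin K) (X : Fin K → Matrix (Fin Nt) (Fin Nt) ℂ) :
    sinrMargin h σ2 γ k X =
      (1 + 1 / γ k) * quadForm (h k) (X k) - (∑ j, quadForm (h k) (X j) + σ2 k) := by
  simp [sinrMargin]

@[simp] lemma totalPower_apply (X : Fin K → Matrix (Fin Nt) (Fin Nt) ℂ) :
    totalPower X = (∑ k, (X k).trace).re := by
  simp [totalPower]

lemma sinrMargin_eq (k : Fin K) (X : Fin K → Matrix (Fin Nt) (Fin Nt) ℂ) :
    sinrMargin h σ2 γ k X = 1 / γ k * quadForm (h k) (X k) -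
      ∑ j ∈ univ.erase k, quadForm (h k) (X j) - σ2 k := by
  rw [sinrMargin_apply, ← Finset.add_sum_erase _ _ (mem_univ k)]
  ring

theorem exists_sdrFeasible_iff (hδ : ∀ k, 0 < δ2 k) (hζ : ∀ k, 0 < ζ k) (he : ∀ k, 0 < e k)
    {X : Fin K → Matrix (Fin Nt) (Fin Nt) ℂ} :
    (∃ ρ, SDRFeasible h σ2 δ2 ζ γ e X ρ) ↔
      X ∈ reducedDomain h σ2 γ ∧ ∀ k, splitConstraint h σ2 δ2 ζ γ e k X ≤ 0 := by
  have hsplit k := exists_powerSplit_iff (Q := sinrMargin h σ2 γ k X)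
    (E := receivedPower h σ2 k X) (hδ k) (he k) (hζ k)
  simp only [sinrMargin_eq, receivedPower_apply] at hsplit
  simp only [SDRFeasible, reducedDomain, splitConstraint, sinrMargin_eq, receivedPower_apply,
    Set.mem_ofPred_eq, sub_nonpos]
  constructor
  · rintro ⟨ρ, hPSD, hρ, hS, hE⟩
    have hk k := (hsplit k).mp ⟨ρ k, hρ k, by linarith [hS k], by linarith [hE k]⟩
    exact ⟨⟨hPSD, fun k => (hk k).1⟩, fun k => (hk k).2⟩
  · rintro ⟨⟨hPSD, hpos⟩, hg⟩
    choose ρ hρ hS hE using fun k => (hsplit k).mpr ⟨hpos k, hg k⟩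
    exact ⟨ρ, hPSD, hρ, fun k => by linarith [hS k], fun k => by linarith [hE k]⟩

lemma convex_reducedDomain : Convex ℝ (reducedDomain h σ2 γ) := by
  rintro X ⟨hXP, hX⟩ Y ⟨hYP, hY⟩ a b ha hb hab
  have hL (L : (Fin K → Matrix (Fin Nt) (Fin Nt) ℂ) →ᵃ[ℝ] ℝ) (hLX : 0 < L X) (hLY : 0 < L Y) :
      0 < L (a • X + b • Y) := by
    rw [Convex.combo_affine_apply hab]
    exact convex_Ioi (0 : ℝ) hLX hLY ha hb hab
  exact ⟨fun k => ((hXP k).smul ha).add ((hYP k).smul hb),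
    fun k => ⟨hL _ (hX k).1 (hY k).1, hL _ (hX k).2 (hY k).2⟩⟩

lemma convexOn_totalPower : ConvexOn ℝ (reducedDomain h σ2 γ) (totalPower (K := K) (Nt := Nt)) :=
  totalPower.convexOn convex_reducedDomain

lemma convexOn_splitConstraint (hδ : ∀ k, 0 < δ2 k) (hζ : ∀ k, 0 < ζ k) (he : ∀ k, 0 < e k)
    (k : Fin K) : ConvexOn ℝ (reducedDomain h σ2 γ) (splitConstraint h σ2 δ2 ζ γ e k) := by
  have hD : Convex ℝ (reducedDomain h σ2 γ) := convex_reducedDomain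
  have hQ := convexOn_const_div_affineMap hD (sinrMargin h σ2 γ k) (fun X hX => (hX.2 k).1)
    (hδ k).le
  have hE := convexOn_const_div_affineMap hD (receivedPower h σ2 k) (fun X hX => (hX.2 k).2)
    (div_pos (he k) (hζ k)).le
  exact ((hQ.add hE).add_const (-1)).congr fun X _ => by
    simp [splitConstraint, div_div, sub_eq_add_neg]

lemma quadForm_pos_of_mem_reducedDomain (hγ : ∀ k, 0 < γ k)
    {X : Fin K → Matrix (Fin Nt) (Fin Nt) ℂ} (hX : X ∈ reducedDomain h σ2 γ) (k : Fin K) :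
    0 < quadForm (h k) (X k) := by
  have hQ := (hX.2 k).1
  have hE := (hX.2 k).2
  rw [sinrMargin_apply, ← receivedPower_apply] at hQ
  exact pos_of_mul_pos_right (hE.trans (sub_pos.mp hQ)) (by have := hγ k; positivity)

theorem two_smul_mem_reducedDomain (hσ : ∀ k, 0 < σ2 k) (hδ : ∀ k, 0 < δ2 k)
    (hζ : ∀ k, 0 < ζ k) (hγ : ∀ k, 0 < γ k) (he : ∀ k, 0 < e k)
    {X : Fin K → Matrix (Fin Nt) (Fin Nt) ℂ} (hX : X ∈ reducedDomain h σ2 γ) :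
    (2 : ℝ) • X ∈ reducedDomain h σ2 γ ∧
      ∀ k, splitConstraint h σ2 δ2 ζ γ e k ((2 : ℝ) • X) < splitConstraint h σ2 δ2 ζ γ e k X := by
  have hS := quadForm_pos_of_mem_reducedDomain hγ hX
  have hQ k : sinrMargin h σ2 γ k X < sinrMargin h σ2 γ k ((2 : ℝ) • X) := by
    have := (hX.2 k).1
    simp only [sinrMargin_apply, Pi.smul_apply, quadForm_smul, ← mul_sum] at this ⊢
    linarith [hσ k]
  have hE k : receivedPower h σ2 k X < receivedPower h σ2 k ((2 : ℝ) • X) := by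
    have := single_le_sum (fun j _ => quadForm_nonneg (v := h k) (hX.1 j)) (mem_univ k)
    simp only [receivedPower_apply, Pi.smul_apply, quadForm_smul, ← mul_sum]
    linarith [hS k]
  refine ⟨⟨fun k => by simpa using (hX.1 k).smul zero_le_two, fun k => ⟨(hX.2 k).1.trans (hQ k),
    (hX.2 k).2.trans (hE k)⟩⟩, fun k => ?_⟩
  have := div_lt_div_of_pos_left (hδ k) (hX.2 k).1 (hQ k)
  have := div_lt_div_of_pos_left (he k) (mul_pos (hζ k) (hX.2 k).2)
    (mul_lt_mul_of_pos_left (hE k) (hζ k))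
  simp only [splitConstraint]
  linarith

lemma receivedPower_linear_single (k i : Fin K) (D : Matrix (Fin Nt) (Fin Nt) ℂ) :
    (receivedPower h σ2 k).linear (Pi.single i D) = quadForm (h k) D := by
  simp [receivedPower, Pi.single_apply, apply_ite (quadForm (h k))]

lemma sinrMargin_linear_single (k i : Fin K) (D : Matrix (Fin Nt) (Fin Nt) ℂ) :
    (sinrMargin h σ2 γ k).linear (Pi.single i D) =
      (if k = i then 1 + 1 / γ k else 0) * quadForm (h k) D - quadForm (h k) D := by
  simp [sinrMargin, receivedPower_linear_single, Pi.single_apply, apply_ite (quadForm (h k))]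

lemma totalPower_single (i : Fin K) (D : Matrix (Fin Nt) (Fin Nt) ℂ) :
    totalPower (Pi.single i D) = D.trace.re := by
  simp [Pi.single_apply, apply_ite trace]

theorem hasDerivAt_lagrangian_add_smul {X : Fin K → Matrix (Fin Nt) (Fin Nt) ℂ}
    (hX : X ∈ reducedDomain h σ2 γ) (lam : Fin K → ℝ) (d : Fin K → Matrix (Fin Nt) (Fin Nt) ℂ) :
    HasDerivAt (fun t : ℝ => lagrangian h σ2 δ2 ζ γ e lam (X + t • d))
      (totalPower d - ∑ j, lam j *
        (δ2 j * (sinrMargin h σ2 γ j).linear d / sinrMargin h σ2 γ j X ^ 2 +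
          e j / ζ j * (receivedPower h σ2 j).linear d / receivedPower h σ2 j X ^ 2)) 0 := by
  have hderiv := (((hasDerivAt_id' (0 : ℝ)).mul_const (totalPower d)).const_add
    (totalPower X)).add (HasDerivAt.sum (u := univ) fun j _ =>
      (((hasDerivAt_div_add_mul (δ2 j) _ ((sinrMargin h σ2 γ j).linear d) (hX.2 j).1.ne').add
        (hasDerivAt_div_add_mul (e j / ζ j) _ ((receivedPower h σ2 j).linear d)
          (hX.2 j).2.ne')).sub_const 1).const_mul (lam j))
  refine (hderiv.congr_deriv ?_).congr_of_eventuallyEq (.of_forall fun t => ?_)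
  · simp only [one_mul, neg_div, ← neg_add, mul_neg, sum_neg_distrib, sub_eq_add_neg]
  · simp only [lagrangian, splitConstraint, map_add, map_smul, smul_eq_mul, Finset.sum_apply,
      AffineMap.apply_add_smul, div_div, Pi.add_apply]

lemma re_trace_dualCertificate_mul (X : Fin K → Matrix (Fin Nt) (Fin Nt) ℂ) (lam : Fin K → ℝ)
    (k : Fin K) (D : Matrix (Fin Nt) (Fin Nt) ℂ) :
    totalPower (Pi.single k D) - ∑ j, lam j *
        (δ2 j * (sinrMargin h σ2 γ j).linear (Pi.single k D) / sinrMargin h σ2 γ j X ^ 2 +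
          e j / ζ j * (receivedPower h σ2 j).linear (Pi.single k D) / receivedPower h σ2 j X ^ 2) =
      (dualCertificate h σ2 δ2 ζ γ e lam X k * D).trace.re := by
  have hterm j : lam j *
      (δ2 j * (sinrMargin h σ2 γ j).linear (Pi.single k D) / sinrMargin h σ2 γ j X ^ 2 +
        e j / ζ j * (receivedPower h σ2 j).linear (Pi.single k D) / receivedPower h σ2 j X ^ 2) =
      (if j = k then lam j * ((1 + 1 / γ j) * δ2 j / sinrMargin h σ2 γ j X ^ 2) *
          quadForm (h j) D else 0) -
        lam j * (δ2 j / sinrMargin h σ2 γ j X ^ 2 -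
          e j / (ζ j * receivedPower h σ2 j X ^ 2)) * quadForm (h j) D := by
    rw [sinrMargin_linear_single, receivedPower_linear_single]
    split_ifs <;> ring
  rw [dualCertificate, re_trace_certificate_mul, totalPower_single,
    sum_congr rfl fun j _ => hterm j, sum_sub_distrib, sum_ite_eq']
  simp only [mem_univ, if_true]
  ring

lemma eventually_add_smul_mem_reducedDomain {X : Fin K → Matrix (Fin Nt) (Fin Nt) ℂ}
    (hX : X ∈ reducedDomain h σ2 γ) (d : Fin K → Matrix (Fin Nt) (Fin Nt) ℂ)
    (hd : ∀ᶠ t in nhdsWithin (0 : ℝ) (Set.Ici 0), ∀ i, (X i + t • d i).PosSemidef) :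
    ∀ᶠ t in nhdsWithin (0 : ℝ) (Set.Ici 0), X + t • d ∈ reducedDomain h σ2 γ := by
  have hpos j : ∀ᶠ t in nhdsWithin (0 : ℝ) (Set.Ici 0),
      0 < sinrMargin h σ2 γ j (X + t • d) ∧ 0 < receivedPower h σ2 j (X + t • d) :=
    nhdsWithin_le_nhds (((sinrMargin h σ2 γ j).eventually_pos_apply_add_smul (hX.2 j).1 d).and
      ((receivedPower h σ2 j).eventually_pos_apply_add_smul (hX.2 j).2 d))
  filter_upwards [hd, Filter.eventually_all.2 hpos] with t hPSD hQE
  exact ⟨hPSD, hQE⟩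

theorem re_trace_dualCertificate_mul_nonneg {X : Fin K → Matrix (Fin Nt) (Fin Nt) ℂ}
    (hX : X ∈ reducedDomain h σ2 γ) {lam : Fin K → ℝ}
    (hmin : IsMinOn (lagrangian h σ2 δ2 ζ γ e lam) (reducedDomain h σ2 γ) X)
    (k : Fin K) (D : Matrix (Fin Nt) (Fin Nt) ℂ)
    (hD : ∀ᶠ t in nhdsWithin (0 : ℝ) (Set.Ici 0), (X k + t • D).PosSemidef) :
    0 ≤ (dualCertificate h σ2 δ2 ζ γ e lam X k * D).trace.re := by
  rw [← re_trace_dualCertificate_mul]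
  refine (hasDerivAt_lagrangian_add_smul hX lam _).nonneg_of_isLocalMinOn_Ici ?_
  have hd : ∀ᶠ t in nhdsWithin (0 : ℝ) (Set.Ici 0),
      ∀ i, (X i + t • Pi.single (M := fun _ => Matrix (Fin Nt) (Fin Nt) ℂ) k D i).PosSemidef := by
    filter_upwards [hD] with t ht i
    rcases eq_or_ne i k with rfl | hik
    · simpa using ht
    · simpa [hik] using hX.1 i
  filter_upwards [eventually_add_smul_mem_reducedDomain hX _ hd] with t ht
  simpa using hmin ht

theorem dualCertificate_posSemidef {X : Fin K → Matrix (Fin Nt) (Fin Nt) ℂ}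
    (hX : X ∈ reducedDomain h σ2 γ) {lam : Fin K → ℝ}
    (hmin : IsMinOn (lagrangian h σ2 δ2 ζ γ e lam) (reducedDomain h σ2 γ) X) (k : Fin K) :
    (dualCertificate h σ2 δ2 ζ γ e lam X k).PosSemidef := by
  refine posSemidef_of_isHermitian_of_quadForm_nonneg (certificate_isHermitian _ _ _ k) fun v => ?_
  rw [← re_trace_mul_vecMulVec]
  exact re_trace_dualCertificate_mul_nonneg hX hmin k _ <| eventually_nhdsWithin_of_forall
    fun t (ht : 0 ≤ t) => (hX.1 k).add ((posSemidef_vecMulVec_self_star v).smul ht)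

theorem re_trace_dualCertificate_mul_self_eq_zero {X : Fin K → Matrix (Fin Nt) (Fin Nt) ℂ}
    (hX : X ∈ reducedDomain h σ2 γ) {lam : Fin K → ℝ}
    (hmin : IsMinOn (lagrangian h σ2 δ2 ζ γ e lam) (reducedDomain h σ2 γ) X) (k : Fin K) :
    (dualCertificate h σ2 δ2 ζ γ e lam X k * X k).trace.re = 0 := by
  have hscale {t : ℝ} (s : ℝ) (hst : 0 ≤ 1 + s * t) : (X k + t • (s • X k)).PosSemidef := by
    have : X k + (s * t) • X k = (1 + s * t) • X k := by rw [add_smul, one_smul]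
    rw [smul_smul, mul_comm, this]
    exact (hX.1 k).smul hst
  have hup := re_trace_dualCertificate_mul_nonneg hX hmin k _ <|
    eventually_nhdsWithin_of_forall fun t (ht : 0 ≤ t) => hscale 1 (by linarith)
  have hdown := re_trace_dualCertificate_mul_nonneg hX hmin k _ <|
    ((eventually_lt_nhds one_pos).filter_mono nhdsWithin_le_nhds).mono fun t (ht : t < 1) =>
      hscale (-1) (by linarith)
  simp only [one_smul, neg_smul, Matrix.mul_neg, trace_neg, Complex.neg_re] at hup hdown
  linarith

theorem eq_zero_of_dualCertificate_mulVec_eq_zero (hδ : ∀ k, 0 < δ2 k) (hγ : ∀ k, 0 < γ k)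
    {X : Fin K → Matrix (Fin Nt) (Fin Nt) ℂ} (hX : X ∈ reducedDomain h σ2 γ) {lam : Fin K → ℝ}
    (hlam : 0 ≤ lam)
    (hZ : ∀ j, (dualCertificate h σ2 δ2 ζ γ e lam X j).PosSemidef) {k : Fin K}
    {v : Fin Nt → ℂ} (hv : dualCertificate h σ2 δ2 ζ γ e lam X k *ᵥ v = 0)
    (hk : star (h k) ⬝ᵥ v = 0) : v = 0 := by
  have hα j : 0 < (1 + 1 / γ j) * δ2 j / sinrMargin h σ2 γ j X ^ 2 := by
    have := hγ j; have := hδ j; have := (hX.2 j).1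
    positivity
  have hv' : quadForm v (dualCertificate h σ2 δ2 ζ γ e lam X k) = 0 := by simp [quadForm, hv]
  refine eq_zero_of_quadForm_certificate_eq_zero (fun j => mul_nonneg (hlam j) (hα j).le)
    (fun j hj => ?_) (fun j v => quadForm_nonneg (hZ j)) hv' hk
  simp [(mul_eq_zero.mp hj).resolve_right (hα j).ne']

end ReducedProblem

theorem sdr_optimal_is_rank_one_general (K Nt : ℕ)
    (h : Fin K → (Fin Nt → ℂ)) (σ2 δ2 ζ γ e : Fin K → ℝ)
    (hσ : ∀ k, 0 < σ2 k) (hδ : ∀ k, 0 < δ2 k)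
    (hζ : ∀ k, 0 < ζ k ∧ ζ k ≤ 1) (hγ : ∀ k, 0 < γ k) (he : ∀ k, 0 < e k)
    (X : Fin K → Matrix (Fin Nt) (Fin Nt) ℂ) (ρ : Fin K → ℝ)
    (hfeas : SDRFeasible h σ2 δ2 ζ γ e X ρ)
    (hopt : ∀ (X' : Fin K → Matrix (Fin Nt) (Fin Nt) ℂ) (ρ' : Fin K → ℝ),
      SDRFeasible h σ2 δ2 ζ γ e X' ρ' →
      (∑ k, (X k).trace).re ≤ (∑ k, (X' k).trace).re) :
    ∀ k, (X k).rank = 1 := by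
  have hζ' k := (hζ k).1
  obtain ⟨hX, hg⟩ := (exists_sdrFeasible_iff hδ hζ' he).mp ⟨ρ, hfeas⟩
  obtain ⟨h2X, h2g⟩ := two_smul_mem_reducedDomain hσ hδ hζ' hγ he hX
  obtain ⟨lam, hlam, hdual⟩ := convexOn_totalPower.exists_lagrange_multipliers
    (convexOn_splitConstraint hδ hζ' he) h2X (fun k => (h2g k).trans_le (hg k))
    (p := totalPower X) fun Y hY hgY => by
      obtain ⟨ρ', hρ'⟩ := (exists_sdrFeasible_iff hδ hζ' he).mpr ⟨hY, hgY⟩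
      simpa using hopt Y ρ' hρ'
  have hmin : IsMinOn (lagrangian h σ2 δ2 ζ γ e lam) (reducedDomain h σ2 γ) X :=
    isMinOn_iff.mpr fun Y hY => by
      have := sum_nonpos fun j (_ : j ∈ univ) => mul_nonpos_of_nonneg_of_nonpos (hlam j) (hg j)
      rw [lagrangian, lagrangian]
      linarith [hdual Y hY]
  intro k
  have hZ j := dualCertificate_posSemidef hX hmin j
  have hZX := (hZ k).mul_eq_zero_of_re_trace_mul_eq_zero (hX.1 k)
    (re_trace_dualCertificate_mul_self_eq_zero hX hmin k)
  have hXh : X k *ᵥ h k ≠ 0 := fun h0 => by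
    simpa [quadForm, h0] using (quadForm_pos_of_mem_reducedDomain hγ hX k).ne'
  refine le_antisymm (rank_le_one_of_mul_eq_zero (star (h k)) hZX fun w hw hkw => ?_)
    (rank_pos_of_mulVec_ne_zero hXh)
  exact eq_zero_of_dualCertificate_mulVec_eq_zero hδ hγ hX hlam hZ hw hkw

theorem sdr_optimal_is_rank_one (K Nt : ℕ) (hK : 1 ≤ K) (hNt : 1 ≤ Nt)
    (h : Fin K → (Fin Nt → ℂ)) (σ2 δ2 ζ γ e : Fin K → ℝ)
    (hσ : ∀ k, 0 < σ2 k) (hδ : ∀ k, 0 < δ2 k)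
    (hζ : ∀ k, 0 < ζ k ∧ ζ k ≤ 1) (hγ : ∀ k, 0 < γ k) (he : ∀ k, 0 < e k)
    (X : Fin K → Matrix (Fin Nt) (Fin Nt) ℂ) (ρ : Fin K → ℝ)
    (hfeas : SDRFeasible h σ2 δ2 ζ γ e X ρ)
    (hopt : ∀ (X' : Fin K → Matrix (Fin Nt) (Fin Nt) ℂ) (ρ' : Fin K → ℝ),
      SDRFeasible h σ2 δ2 ζ γ e X' ρ' →
      (∑ k, (X k).trace).re ≤ (∑ k, (X' k).trace).re) :
    ∀ k, (X k).rank = 1 :=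
  sdr_optimal_is_rank_one_general K Nt h σ2 δ2 ζ γ e hσ hδ hζ hγ he X ρ hfeas hopt
end
end

section
/- Suppose v̂_1,…,v̂_K ∈ ℂ^{N_t} satisfy the SINR constraints with equality: |h_k^H v̂_k|²/(Σ_{j≠k}|h_k^H v̂_j|² + σ_k² + δ_k²) = γ_k for all k. Define c_k = |h_k^H v̂_k|²/γ_k − Σ_{j≠k}|h_k^H v̂_j|² (so c_k = σ_k² + δ_k²) and d_k = Σ_{j=1}^K |h_k^H v̂_j|². For each k let ᾱ_k be the largest real root of δ_k²/(α c_k − σ_k²) + e_k/(ζ_k(α d_k + σ_k²)) = 1, let α̃* = max_{1≤k≤K} ᾱ_k, and set ρ̃_k* = δ_k²/(α̃* c_k − σ_k²). Then (α̃*, {ρ̃_k*}) is an optimal solution of the scaling problem: α̃* > 1, ρ̃_k* ∈ (0,1), SINR_k(√α̃*·v̂, ρ̃*) ≥ γ_k and E_k(√α̃*·v̂, ρ̃*) ≥ e_k for all k, and α̃* ≤ α for every α > 1 admitting ρ_1,…,ρ_K ∈ (0,1) with SINR_k(√α·v̂, ρ) ≥ γ_k and E_k(√α·v̂, ρ) ≥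 e_k for all k. -/
/-!
Fix a user `k`; the SINR equalities give `c = σ² + δ²`, and put `d = ∑ⱼ |hₖᴴ v̂ⱼ|²`. Scaling by `α`
multiplies every received power by `α`, so user `k` is served at scaling `α ≥ 1` by a ratio `ρ`
exactly when `δ² / (α c - σ²) ≤ ρ ≤ 1 - e / (ζ (α d + σ²))`. Such a `ρ` exists iff
`f(α) = δ² / (α c - σ²) + e / (ζ (α d + σ²)) ≤ 1`. On `[1, ∞)` the function `f` is continuous and
strictly decreasing, from `f(1) > 1` down to `0`, so its largest root `ᾱₖ` exceeds `1` and user `k`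
is servable exactly for `α ≥ ᾱₖ`. Hence `α̃* = maxₖ ᾱₖ` is the least feasible scaling, and at `α̃*`
the least SINR-feasible ratio `δ² / (α̃* c - σ²)` serves every user.
-/

noncomputable section

open Finset

/-- SINR of user `k` with beamformers `v` and power-splitting ratios `ρ`. -/
def SINR {K Nt : ℕ} (h : Fin K → EuclideanSpace ℂ (Fin Nt)) (σ2 δ2 : Fin K → ℝ)
    (v : Fin K → EuclideanSpace ℂ (Fin Nt)) (ρ : Fin K → ℝ) (k : Fin K) : ℝ :=
  ρ k * ‖(inner ℂ (h k) (v k) : ℂ)‖ ^ 2 /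
    (ρ k * ∑ j ∈ univ.erase k, ‖(inner ℂ (h k) (v j) : ℂ)‖ ^ 2 + ρ k * σ2 k + δ2 k)

/-- Harvested power of user `k`. -/
def EH {K Nt : ℕ} (h : Fin K → EuclideanSpace ℂ (Fin Nt)) (σ2 ζ : Fin K → ℝ)
    (v : Fin K → EuclideanSpace ℂ (Fin Nt)) (ρ : Fin K → ℝ) (k : Fin K) : ℝ :=
  ζ k * (1 - ρ k) * ((∑ j, ‖(inner ℂ (h k) (v j) : ℂ)‖ ^ 2) + σ2 k)

/-- The family `(√α v̂_1, …, √α v̂_K)`. -/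
def scaled {K Nt : ℕ} (α : ℝ) (v : Fin K → EuclideanSpace ℂ (Fin Nt)) :
    Fin K → EuclideanSpace ℂ (Fin Nt) :=
  fun k => (Real.sqrt α : ℂ) • v k

open Filter Topology

section SplitDemand

variable {σ δ ζ e c d α : ℝ}

/-- The function `f` of the root equation: the least ratio `ρ` meeting the SINR target plus the
least share `1 - ρ` meeting the harvesting target. -/
def splitDemand (σ δ ζ e c d α : ℝ) : ℝ := δ / (α * c - σ) + e / (ζ * (α * d + σ))

lemma lt_mul_of_one_le_of_eq_add (hσ : 0 ≤ σ) (hδ : 0 < δ) (hc : c = σ + δ) (hα : 1 ≤ α) :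
    σ < α * c := by
  rw [hc]
  nlinarith

lemma div_mul_sub_mem_Ioo (hσ : 0 ≤ σ) (hδ : 0 < δ) (hc : c = σ + δ) (hα : 1 < α) :
    δ / (α * c - σ) ∈ Set.Ioo 0 1 := by
  have hlt : δ < α * c - σ := by rw [hc]; nlinarith
  exact ⟨div_pos hδ (hδ.trans hlt), (div_lt_one (hδ.trans hlt)).2 hlt⟩

lemma splitDemand_strictAntiOn (hσ : 0 < σ) (hδ : 0 < δ) (hζ : 0 < ζ) (he : 0 ≤ e)
    (hc : 0 < c) (hd : 0 ≤ d) :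
    StrictAntiOn (splitDemand σ δ ζ e c d) {α | σ < α * c} := by
  intro a (ha : σ < a * c) b _ hab
  have ha0 : 0 < a := pos_of_mul_pos_left (hσ.trans ha) hc.le
  have hSINR : δ / (b * c - σ) < δ / (a * c - σ) :=
    div_lt_div_of_pos_left hδ (sub_pos.2 ha) (by gcongr)
  have hEH : e / (ζ * (b * d + σ)) ≤ e / (ζ * (a * d + σ)) :=
    div_le_div_of_nonneg_left he (by positivity) (by gcongr)
  exact add_lt_add_of_lt_of_le hSINR hEH

lemma continuousOn_splitDemand (hσ : 0 < σ) (hζ : 0 < ζ) (hc : 0 < c) (hd : 0 ≤ d) :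
    ContinuousOn (splitDemand σ δ ζ e c d) {α | σ < α * c} := by
  refine ContinuousOn.add (continuousOn_const.div (by fun_prop) fun α hα => ?_)
    (continuousOn_const.div (by fun_prop) fun α (hα : σ < α * c) => ?_)
  · exact (sub_pos.2 hα).ne'
  · have : 0 < α := pos_of_mul_pos_left (hσ.trans hα) hc.le
    positivity

lemma tendsto_splitDemand_atTop (hζ : 0 < ζ) (hc : 0 < c) (hd : 0 < d) :
    Tendsto (splitDemand σ δ ζ e c d) atTop (𝓝 0) := by
  have hSINR : Tendsto (fun α => α * c - σ) atTop atTop :=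
    tendsto_atTop_add_const_right _ _ (tendsto_id.atTop_mul_const hc)
  have hEH : Tendsto (fun α => ζ * (α * d + σ)) atTop atTop :=
    (tendsto_atTop_add_const_right _ _ (tendsto_id.atTop_mul_const hd)).const_mul_atTop hζ
  rw [← add_zero (0 : ℝ)]
  exact (tendsto_const_nhds.div_atTop hSINR).add (tendsto_const_nhds.div_atTop hEH)

lemma exists_gt_splitDemand_eq_one {a : ℝ} (hσ : 0 < σ) (hζ : 0 < ζ) (hc : 0 < c)
    (hd : 0 < d) (ha : σ < a * c) (h1 : 1 < splitDemand σ δ ζ e c d a) :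
    ∃ α, a < α ∧ splitDemand σ δ ζ e c d α = 1 := by
  obtain ⟨M, haM, hM⟩ := ((eventually_ge_atTop a).and
    ((tendsto_splitDemand_atTop hζ hc hd).eventually (gt_mem_nhds one_pos))).exists
  have hIcc : Set.Icc a M ⊆ {α | σ < α * c} := fun α hα =>
    ha.trans_le (by gcongr; exact hα.1)
  obtain ⟨α, hα, hα1⟩ := intermediate_value_Icc' haM
    ((continuousOn_splitDemand hσ hζ hc hd.le).mono hIcc) ⟨hM.le, h1.le⟩
  exact ⟨α, hα.1.lt_of_ne (by rintro rfl; exact h1.ne' hα1), hα1⟩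

lemma one_lt_splitDemand_one (hσ : 0 < σ) (hδ : 0 < δ) (hζ : 0 < ζ) (he : 0 < e)
    (hc : c = σ + δ) (hd : 0 ≤ d) : 1 < splitDemand σ δ ζ e c d 1 := by
  have : 0 < e / (ζ * (d + σ)) := by positivity
  simp only [splitDemand, hc, one_mul, add_sub_cancel_left, div_self hδ.ne']
  linarith

lemma one_lt_of_mem_upperBounds_splitDemand_eq_one {αbar : ℝ} (hσ : 0 < σ) (hδ : 0 < δ)
    (hζ : 0 < ζ) (he : 0 < e) (hc : c = σ + δ) (hd : 0 < d)
    (h : αbar ∈ upperBounds {α | splitDemand σ δ ζ e c d α = 1}) : 1 < αbar := by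
  obtain ⟨α, h1α, hα⟩ := exists_gt_splitDemand_eq_one hσ hζ (by linarith) hd
    (lt_mul_of_one_le_of_eq_add hσ.le hδ hc le_rfl) (one_lt_splitDemand_one hσ hδ hζ he hc hd.le)
  exact h1α.trans_le (h hα)

end SplitDemand

section Scaling

variable {K Nt : ℕ} {h v : Fin K → EuclideanSpace ℂ (Fin Nt)} {σ2 δ2 ζ γ e : Fin K → ℝ}
  {ρ : Fin K → ℝ} {k : Fin K} {α c d : ℝ}

lemma norm_inner_scaled_sq (hα : 0 ≤ α) (w : EuclideanSpace ℂ (Fin Nt)) (j : Fin K) :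
    ‖(inner ℂ w (scaled α v j) : ℂ)‖ ^ 2 = α * ‖(inner ℂ w (v j) : ℂ)‖ ^ 2 := by
  rw [scaled, inner_smul_right, norm_mul, mul_pow, Complex.norm_real, Real.norm_eq_abs,
    sq_abs, Real.sq_sqrt hα]

lemma SINR_scaled (hα : 0 ≤ α) :
    SINR h σ2 δ2 (scaled α v) ρ k = ρ k * (α * ‖(inner ℂ (h k) (v k) : ℂ)‖ ^ 2) /
      (ρ k * (α * ∑ j ∈ univ.erase k, ‖(inner ℂ (h k) (v j) : ℂ)‖ ^ 2) + ρ k * σ2 k + δ2 k) := by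
  simp only [SINR, norm_inner_scaled_sq hα, mul_sum]

lemma EH_scaled (hα : 0 ≤ α) :
    EH h σ2 ζ (scaled α v) ρ k =
      ζ k * (1 - ρ k) * (α * ∑ j, ‖(inner ℂ (h k) (v j) : ℂ)‖ ^ 2 + σ2 k) := by
  simp only [EH, norm_inner_scaled_sq hα, mul_sum]

lemma le_SINR_scaled_iff (hσ : 0 ≤ σ2 k) (hδ : 0 < δ2 k) (hγ : 0 < γ k)
    (hS : ‖(inner ℂ (h k) (v k) : ℂ)‖ ^ 2 =
      γ k * (∑ j ∈ univ.erase k, ‖(inner ℂ (h k) (v j) : ℂ)‖ ^ 2 + σ2 k + δ2 k))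
    (hα : 0 ≤ α) (hρ : 0 ≤ ρ k) :
    γ k ≤ SINR h σ2 δ2 (scaled α v) ρ k ↔ δ2 k ≤ ρ k * (α * (σ2 k + δ2 k) - σ2 k) := by
  have hI : 0 ≤ ∑ j ∈ univ.erase k, ‖(inner ℂ (h k) (v j) : ℂ)‖ ^ 2 :=
    sum_nonneg fun _ _ => sq_nonneg _
  rw [SINR_scaled hα]
  generalize ∑ j ∈ univ.erase k, ‖(inner ℂ (h k) (v j) : ℂ)‖ ^ 2 = I at hI hS ⊢
  have hD : 0 < ρ k * (α * I) + ρ k * σ2 k + δ2 k := by positivity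
  have hgap : ρ k * (α * (γ k * (I + σ2 k + δ2 k))) - γ k * (ρ k * (α * I) + ρ k * σ2 k + δ2 k)
      = γ k * (ρ k * (α * (σ2 k + δ2 k) - σ2 k) - δ2 k) := by ring
  rw [le_div_iff₀ hD, hS, ← sub_nonneg, hgap, mul_nonneg_iff_of_pos_left hγ, sub_nonneg]

lemma le_EH_scaled_iff (hσ : 0 < σ2 k) (hζ : 0 < ζ k) (hα : 0 ≤ α) :
    e k ≤ EH h σ2 ζ (scaled α v) ρ k ↔
      e k / (ζ k * (α * ∑ j, ‖(inner ℂ (h k) (v j) : ℂ)‖ ^ 2 + σ2 k)) ≤ 1 - ρ k := by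
  rw [EH_scaled hα, div_le_iff₀ (by positivity), mul_right_comm, mul_comm (ζ k * _)]

lemma norm_inner_sq_eq_of_div_eq (hσ : 0 ≤ σ2 k) (hδ : 0 < δ2 k)
    (heq : ‖(inner ℂ (h k) (v k) : ℂ)‖ ^ 2 /
      (∑ j ∈ univ.erase k, ‖(inner ℂ (h k) (v j) : ℂ)‖ ^ 2 + σ2 k + δ2 k) = γ k) :
    ‖(inner ℂ (h k) (v k) : ℂ)‖ ^ 2 =
      γ k * (∑ j ∈ univ.erase k, ‖(inner ℂ (h k) (v j) : ℂ)‖ ^ 2 + σ2 k + δ2 k) := by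
  have hD : 0 < ∑ j ∈ univ.erase k, ‖(inner ℂ (h k) (v j) : ℂ)‖ ^ 2 + σ2 k + δ2 k :=
    add_pos_of_nonneg_of_pos (add_nonneg (sum_nonneg fun _ _ => sq_nonneg _) hσ) hδ
  exact (div_eq_iff hD.ne').1 heq

lemma div_sub_sum_eq (hγ : 0 < γ k)
    (hS : ‖(inner ℂ (h k) (v k) : ℂ)‖ ^ 2 =
      γ k * (∑ j ∈ univ.erase k, ‖(inner ℂ (h k) (v j) : ℂ)‖ ^ 2 + σ2 k + δ2 k)) :
    ‖(inner ℂ (h k) (v k) : ℂ)‖ ^ 2 / γ k -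
      ∑ j ∈ univ.erase k, ‖(inner ℂ (h k) (v j) : ℂ)‖ ^ 2 = σ2 k + δ2 k := by
  rw [hS, mul_div_cancel_left₀ _ hγ.ne']
  ring

lemma sum_norm_inner_sq_pos (hσ : 0 ≤ σ2 k) (hδ : 0 < δ2 k) (hγ : 0 < γ k)
    (hS : ‖(inner ℂ (h k) (v k) : ℂ)‖ ^ 2 =
      γ k * (∑ j ∈ univ.erase k, ‖(inner ℂ (h k) (v j) : ℂ)‖ ^ 2 + σ2 k + δ2 k)) :
    0 < ∑ j, ‖(inner ℂ (h k) (v j) : ℂ)‖ ^ 2 := by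
  have hI : 0 ≤ ∑ j ∈ univ.erase k, ‖(inner ℂ (h k) (v j) : ℂ)‖ ^ 2 :=
    sum_nonneg fun _ _ => sq_nonneg _
  calc 0 < ‖(inner ℂ (h k) (v k) : ℂ)‖ ^ 2 := by rw [hS]; exact mul_pos hγ (by linarith)
    _ ≤ ∑ j, ‖(inner ℂ (h k) (v j) : ℂ)‖ ^ 2 :=
      single_le_sum (f := fun j => ‖(inner ℂ (h k) (v j) : ℂ)‖ ^ 2)
        (fun _ _ => sq_nonneg _) (mem_univ k)

lemma splitDemand_le_one_of_feasible (hσ : 0 < σ2 k) (hδ : 0 < δ2 k) (hζ : 0 < ζ k)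
    (hγ : 0 < γ k)
    (hS : ‖(inner ℂ (h k) (v k) : ℂ)‖ ^ 2 =
      γ k * (∑ j ∈ univ.erase k, ‖(inner ℂ (h k) (v j) : ℂ)‖ ^ 2 + σ2 k + δ2 k))
    (hc : c = σ2 k + δ2 k) (hd : d = ∑ j, ‖(inner ℂ (h k) (v j) : ℂ)‖ ^ 2)
    (hα : 1 ≤ α) (hρ : 0 ≤ ρ k) (hSINR : γ k ≤ SINR h σ2 δ2 (scaled α v) ρ k)
    (hEH : e k ≤ EH h σ2 ζ (scaled α v) ρ k) :
    splitDemand (σ2 k) (δ2 k) (ζ k) (e k) c d α ≤ 1 := by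
  have hα0 : 0 ≤ α := zero_le_one.trans hα
  have hpos : 0 < α * c - σ2 k := sub_pos.2 (lt_mul_of_one_le_of_eq_add hσ.le hδ hc hα)
  have hρSINR : δ2 k / (α * c - σ2 k) ≤ ρ k :=
    (div_le_iff₀ hpos).2 (hc ▸ (le_SINR_scaled_iff hσ.le hδ hγ hS hα0 hρ).1 hSINR)
  have hρEH := hd ▸ (le_EH_scaled_iff hσ hζ hα0).1 hEH
  rw [splitDemand]
  linarith

lemma feasible_of_splitDemand_le_one (hσ : 0 < σ2 k) (hδ : 0 < δ2 k) (hζ : 0 < ζ k)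
    (hγ : 0 < γ k)
    (hS : ‖(inner ℂ (h k) (v k) : ℂ)‖ ^ 2 =
      γ k * (∑ j ∈ univ.erase k, ‖(inner ℂ (h k) (v j) : ℂ)‖ ^ 2 + σ2 k + δ2 k))
    (hc : c = σ2 k + δ2 k) (hd : d = ∑ j, ‖(inner ℂ (h k) (v j) : ℂ)‖ ^ 2)
    (hα : 1 ≤ α) (hρ : ρ k = δ2 k / (α * c - σ2 k))
    (hdem : splitDemand (σ2 k) (δ2 k) (ζ k) (e k) c d α ≤ 1) :
    γ k ≤ SINR h σ2 δ2 (scaled α v) ρ k ∧ e k ≤ EH h σ2 ζ (scaled α v) ρ k := by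
  have hα0 : 0 ≤ α := zero_le_one.trans hα
  have hpos : 0 < α * c - σ2 k := sub_pos.2 (lt_mul_of_one_le_of_eq_add hσ.le hδ hc hα)
  constructor
  · rw [le_SINR_scaled_iff hσ.le hδ hγ hS hα0 (hρ ▸ by positivity), ← hc, hρ,
      div_mul_cancel₀ _ hpos.ne']
  · rw [le_EH_scaled_iff hσ hζ hα0, ← hd, hρ]
    rw [splitDemand] at hdem
    linarith

end Scaling

theorem scaling_problem_optimal_solution_general (K Nt : ℕ)
    (h : Fin K → EuclideanSpace ℂ (Fin Nt)) (σ2 δ2 ζ γ e : Fin K → ℝ)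
    (hσ : ∀ k, 0 < σ2 k) (hδ : ∀ k, 0 < δ2 k)
    (hζ : ∀ k, 0 < ζ k ∧ ζ k ≤ 1) (hγ : ∀ k, 0 < γ k) (he : ∀ k, 0 < e k)
    (vh : Fin K → EuclideanSpace ℂ (Fin Nt))
    (heq : ∀ k, ‖(inner ℂ (h k) (vh k) : ℂ)‖ ^ 2 /
      ((∑ j ∈ univ.erase k, ‖(inner ℂ (h k) (vh j) : ℂ)‖ ^ 2) + σ2 k + δ2 k) = γ k)
    (c d : Fin K → ℝ)
    (hc : ∀ k, c k = ‖(inner ℂ (h k) (vh k) : ℂ)‖ ^ 2 / γ k -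
      ∑ j ∈ univ.erase k, ‖(inner ℂ (h k) (vh j) : ℂ)‖ ^ 2)
    (hd : ∀ k, d k = ∑ j, ‖(inner ℂ (h k) (vh j) : ℂ)‖ ^ 2)
    (αbar : Fin K → ℝ)
    (hroot : ∀ k, δ2 k / (αbar k * c k - σ2 k) +
      e k / (ζ k * (αbar k * d k + σ2 k)) = 1)
    (hlargest : ∀ k, ∀ α : ℝ,
      δ2 k / (α * c k - σ2 k) + e k / (ζ k * (α * d k + σ2 k)) = 1 → α ≤ αbar k)
    (αstar : ℝ) (hαstar : (∀ k, αbar k ≤ αstar) ∧ ∃ k, αbar k = αstar)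
    (ρt : Fin K → ℝ) (hρt : ∀ k, ρt k = δ2 k / (αstar * c k - σ2 k)) :
    1 < αstar ∧
    (∀ k, 0 < ρt k ∧ ρt k < 1) ∧
    (∀ k, γ k ≤ SINR h σ2 δ2 (scaled αstar vh) ρt k) ∧
    (∀ k, e k ≤ EH h σ2 ζ (scaled αstar vh) ρt k) ∧
    (∀ α : ℝ, 1 < α →
      (∃ ρ : Fin K → ℝ, (∀ k, 0 < ρ k ∧ ρ k < 1) ∧
        (∀ k, γ k ≤ SINR h σ2 δ2 (scaled α vh) ρ k) ∧
        (∀ k, e k ≤ EH h σ2 ζ (scaled α vh) ρ k)) →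
      αstar ≤ α) := by
  obtain ⟨hub, k₀, hk₀⟩ := hαstar
  have hS : ∀ k, ‖(inner ℂ (h k) (vh k) : ℂ)‖ ^ 2 =
      γ k * (∑ j ∈ univ.erase k, ‖(inner ℂ (h k) (vh j) : ℂ)‖ ^ 2 + σ2 k + δ2 k) := fun k =>
    norm_inner_sq_eq_of_div_eq (hσ k).le (hδ k) (heq k)
  have hck : ∀ k, c k = σ2 k + δ2 k := fun k => (hc k).trans (div_sub_sum_eq (hγ k) (hS k))
  have hdk : ∀ k, 0 < d k := fun k => hd k ▸ sum_norm_inner_sq_pos (hσ k).le (hδ k) (hγ k) (hS k)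
  have hanti : ∀ k,
      StrictAntiOn (splitDemand (σ2 k) (δ2 k) (ζ k) (e k) (c k) (d k)) (Set.Ici 1) := fun k =>
    (splitDemand_strictAntiOn (hσ k) (hδ k) (hζ k).1 (he k).le (hck k ▸ add_pos (hσ k) (hδ k))
      (hdk k).le).mono fun _ => lt_mul_of_one_le_of_eq_add (hσ k).le (hδ k) (hck k)
  have hbar : ∀ k, 1 < αbar k := fun k =>
    one_lt_of_mem_upperBounds_splitDemand_eq_one (hσ k) (hδ k) (hζ k).1 (he k) (hck k) (hdk k)
      (hlargest k)
  have hαs : 1 < αstar := hk₀ ▸ hbar k₀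
  have hfeas : ∀ k, γ k ≤ SINR h σ2 δ2 (scaled αstar vh) ρt k ∧
      e k ≤ EH h σ2 ζ (scaled αstar vh) ρt k := fun k =>
    feasible_of_splitDemand_le_one (hσ k) (hδ k) (hζ k).1 (hγ k) (hS k) (hck k) (hd k) hαs.le
      (hρt k) (hroot k ▸ (hanti k).antitoneOn (hbar k).le hαs.le (hub k))
  refine ⟨hαs, fun k => hρt k ▸ div_mul_sub_mem_Ioo (hσ k).le (hδ k) (hck k) hαs,
    fun k => (hfeas k).1, fun k => (hfeas k).2, ?_⟩
  rintro α hα ⟨ρ, hρ, hSINR, hEH⟩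
  rw [← hk₀, ← (hanti k₀).le_iff_ge hα.le (hbar k₀).le]
  exact (splitDemand_le_one_of_feasible (hσ k₀) (hδ k₀) (hζ k₀).1 (hγ k₀) (hS k₀) (hck k₀)
    (hd k₀) hα.le (hρ k₀).1.le (hSINR k₀) (hEH k₀)).trans (hroot k₀).ge

theorem scaling_problem_optimal_solution (K Nt : ℕ) (hK : 1 ≤ K) (hNt : 1 ≤ Nt)
    (h : Fin K → EuclideanSpace ℂ (Fin Nt)) (σ2 δ2 ζ γ e : Fin K → ℝ)
    (hσ : ∀ k, 0 < σ2 k) (hδ : ∀ k, 0 < δ2 k)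
    (hζ : ∀ k, 0 < ζ k ∧ ζ k ≤ 1) (hγ : ∀ k, 0 < γ k) (he : ∀ k, 0 < e k)
    (vh : Fin K → EuclideanSpace ℂ (Fin Nt))
    (heq : ∀ k, ‖(inner ℂ (h k) (vh k) : ℂ)‖ ^ 2 /
      ((∑ j ∈ univ.erase k, ‖(inner ℂ (h k) (vh j) : ℂ)‖ ^ 2) + σ2 k + δ2 k) = γ k)
    (c d : Fin K → ℝ)
    (hc : ∀ k, c k = ‖(inner ℂ (h k) (vh k) : ℂ)‖ ^ 2 / γ k -
      ∑ j ∈ univ.erase k, ‖(inner ℂ (h k) (vh j) : ℂ)‖ ^ 2)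
    (hd : ∀ k, d k = ∑ j, ‖(inner ℂ (h k) (vh j) : ℂ)‖ ^ 2)
    (αbar : Fin K → ℝ)
    (hroot : ∀ k, δ2 k / (αbar k * c k - σ2 k) +
      e k / (ζ k * (αbar k * d k + σ2 k)) = 1)
    (hlargest : ∀ k, ∀ α : ℝ,
      δ2 k / (α * c k - σ2 k) + e k / (ζ k * (α * d k + σ2 k)) = 1 → α ≤ αbar k)
    (αstar : ℝ) (hαstar : (∀ k, αbar k ≤ αstar) ∧ ∃ k, αbar k = αstar)
    (ρt : Fin K → ℝ) (hρt : ∀ k, ρt k = δ2 k / (αstar * c k - σ2 k)) :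
    1 < αstar ∧
    (∀ k, 0 < ρt k ∧ ρt k < 1) ∧
    (∀ k, γ k ≤ SINR h σ2 δ2 (scaled αstar vh) ρt k) ∧
    (∀ k, e k ≤ EH h σ2 ζ (scaled αstar vh) ρt k) ∧
    (∀ α : ℝ, 1 < α →
      (∃ ρ : Fin K → ℝ, (∀ k, 0 < ρ k ∧ ρ k < 1) ∧
        (∀ k, γ k ≤ SINR h σ2 δ2 (scaled α vh) ρ k) ∧
        (∀ k, e k ≤ EH h σ2 ζ (scaled α vh) ρ k)) →
      αstar ≤ α) :=
  scaling_problem_optimal_solution_general K Nt h σ2 δ2 ζ γ e hσ hδ hζ hγ he vh heq c d hc hd αbar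
    hroot hlargest αstar hαstar ρt hρt
end
end
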